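/- For positive integers a_1, ..., a_n, write [2a_1, ..., 2a_n]^+ = p_n/q_n in lowest terms. Then p_n is even if and only if n is odd. -/

import Mathlib

/-!
Adding an even integer `2a` to a rational changes neither its denominator nor the parity of
its numerator, while inverting a nonzero `p/q` in lowest terms gives `±q/|p|`, swapping the
parities of numerator and denominator. Since `[2a₁, …, 2aₙ]⁺ = 2a₁ + 1/[2a₂, …, 2aₙ]⁺` and
positivity of the `aᵢ` keeps every tail nonzero, the parities are swapped `n - 1` times
starting from `[2aₙ]⁺ = 2aₙ/1`.
-/

/-- The even continued fraction `[2a₁, 2a₂, …, 2aₙ]⁺`. -/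
def ecf : List ℕ → ℚ
  | [] => 0
  | a :: l => 2 * a + 1 / ecf l

namespace Rat

theorem intCast_add_num (n : ℤ) (q : ℚ) : ((n : ℚ) + q).num = n * q.den + q.num := by
  have h := mul_den_eq_num ((n : ℚ) + q)
  rw [intCast_add_den, add_mul, mul_den_eq_num] at h
  exact_mod_cast h.symm

theorem even_num_two_mul_natCast_add_iff (n : ℕ) (q : ℚ) :
    Even (2 * (n : ℚ) + q).num ↔ Even q.num := by
  have h := intCast_add_num (2 * n) q
  push_cast at h
  rw [h, Int.even_add]
  simp

theorem den_two_mul_natCast_add (n : ℕ) (q : ℚ) : (2 * (n : ℚ) + q).den = q.den := by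
  exact_mod_cast intCast_add_den (2 * n) q

theorem even_num_inv_iff {q : ℚ} (hq : q ≠ 0) : Even q⁻¹.num ↔ Even q.den := by
  rw [num_inv, Int.even_mul, ← Int.natAbs_even (n := q.num.sign),
    Int.natAbs_sign_of_ne_zero (num_ne_zero.mpr hq), Int.even_coe_nat]
  simp

theorem even_den_inv_iff {q : ℚ} (hq : q ≠ 0) : Even q⁻¹.den ↔ Even q.num := by
  rw [den_inv, if_neg (num_ne_zero.mpr hq), ← Int.even_coe_nat, Int.natCast_natAbs,
    even_abs]

end Rat

theorem ecf_cons (a : ℕ) (l : List ℕ) : ecf (a :: l) = 2 * a + (ecf l)⁻¹ := by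
  rw [ecf, one_div]

theorem ecf_nonneg : ∀ l : List ℕ, 0 ≤ ecf l
  | [] => le_rfl
  | a :: l => by rw [ecf_cons]; have := ecf_nonneg l; positivity

theorem ecf_cons_pos {a : ℕ} (ha : 1 ≤ a) (l : List ℕ) : 0 < ecf (a :: l) := by
  have ha' : (0 : ℚ) < a := by exact_mod_cast ha
  have := ecf_nonneg l
  rw [ecf_cons]
  positivity

theorem even_num_inv_ecf_iff_and_even_den_inv_ecf_iff {l : List ℕ} (hl : ∀ b ∈ l, 1 ≤ b) :
    (Even (ecf l)⁻¹.num ↔ Even l.length) ∧ (Even (ecf l)⁻¹.den ↔ Odd l.length) := by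
  induction l with
  | nil => simp [ecf]
  | cons b l ih =>
    have hr : ecf (b :: l) ≠ 0 := (ecf_cons_pos (hl b List.mem_cons_self) l).ne'
    obtain ⟨hnum, hden⟩ := ih fun c hc => hl c (List.mem_cons_of_mem b hc)
    rw [Rat.even_num_inv_iff hr, Rat.even_den_inv_iff hr, ecf_cons,
      Rat.even_num_two_mul_natCast_add_iff, Rat.den_two_mul_natCast_add, hden, hnum,
      List.length_cons, Nat.even_add_one, Nat.odd_add_one, Nat.not_odd_iff_even,
      Nat.not_even_iff_odd]
    exact ⟨.rfl, .rfl⟩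

/-- For positive integers `a₁, …, aₙ`, writing `[2a₁, …, 2aₙ]⁺ = pₙ/qₙ` in lowest
terms, the numerator `pₙ` is even if and only if `n` is odd. -/
theorem stmt_2 (l : List ℕ) (hne : l ≠ []) (hpos : ∀ a ∈ l, 1 ≤ a) :
    Even (ecf l).num ↔ Odd l.length := by
  obtain ⟨a, l, rfl⟩ := List.exists_cons_of_ne_nil hne
  have htail : ∀ b ∈ l, 1 ≤ b := fun b hb => hpos b (List.mem_cons_of_mem a hb)
  rw [ecf_cons, Rat.even_num_two_mul_natCast_add_iff,
    (even_num_inv_ecf_iff_and_even_den_inv_ecf_iff htail).1, List.length_cons, Nat.odd_add_one,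
    Nat.not_odd_iff_even]
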